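/- arXiv:2312.09607 — 2 statements merged into one kernel-verified Lean document; each statement's English description precedes it below -/
import Mathlib

section
/- Assume transition densities m_θ, m_θ' satisfy σ₋ ≤ m_θ(x,x'), m_θ'(x,x') ≤ σ₊ and |m_θ(x,x') − m_θ'(x,x')| ≤ M(x,x')·‖θ−θ'‖, and likelihoods g satisfy |g_θ(x) − g_θ'(x)| ≤ G(x)·‖θ−θ'‖ with c₋ ≤ ∫ g_θ dμ for all θ. Let Φ be a probability measure on X and define the one-step forward operators F_θΦ(h) = ∫∫ Φ(dx) m_θ(x,x') g_θ(x') h(x') μ(dx') / ∫∫ Φ(dx) m_θ(x,x') g_θ(x') μ(dx'). Then ‖F_θΦ − F_θ'Φ‖_tv ≤ (2σ₊/(σ₋c₋))·( (1/(σ₋c'₋))·∬ μ⊗μ(dx dx') M(x,x') ḡ(x) ḡ'(x') + ∫ G dμ )·‖θ−θ'‖ where ḡ, ḡ' denote uniform upper envelopes of the likelihoods and c'₋ a lower normalization bound, i.e., the one-step filter update is Lipschitz in θ in total variation with explicit constant. -/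
open MeasureTheory

/-- The one-step forward (predict-correct) filter operator is Lipschitz in the
parameter, in total variation and with explicit constant (single-step Lipschitz
estimate inside Lemma B.2 of the paper). The parameter distance is abstracted as
δ = ‖θ - θ'‖. -/
theorem stmt_10 {X : Type*} [MeasurableSpace X] (μ : Measure X) [IsProbabilityMeasure μ]
    (m m' : X → X → ℝ) (g g' : X → ℝ) (M : X → X → ℝ) (G : X → ℝ)
    (gbar gbar' : X → ℝ) (φ : X → ℝ)
    (σm σp cm cm' δ : ℝ)
    (hσm : 0 < σm) (hσ : σm ≤ σp) (hcm : 0 < cm) (hcm' : 0 < cm') (hδ : 0 ≤ δ)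
    (hmmeas : Measurable (Function.uncurry m)) (hm'meas : Measurable (Function.uncurry m'))
    (hgmeas : Measurable g) (hg'meas : Measurable g')
    (hMmeas : Measurable (Function.uncurry M)) (hGmeas : Measurable G)
    (hgbmeas : Measurable gbar) (hgb'meas : Measurable gbar') (hφmeas : Measurable φ)
    (hmbd : ∀ x x', σm ≤ m x x' ∧ m x x' ≤ σp)
    (hm'bd : ∀ x x', σm ≤ m' x x' ∧ m' x x' ≤ σp)
    (hM0 : ∀ x x', 0 ≤ M x x') (hG0 : ∀ x, 0 ≤ G x)
    (hmlip : ∀ x x', |m x x' - m' x x'| ≤ M x x' * δ)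
    (hglip : ∀ x, |g x - g' x| ≤ G x * δ)
    (hg0 : ∀ x, 0 ≤ g x) (hg'0 : ∀ x, 0 ≤ g' x)
    (hgc : cm ≤ ∫ x, g x ∂μ) (hg'c : cm ≤ ∫ x, g' x ∂μ)
    (hgenv : ∀ x, g x ≤ gbar' x) (hg'env : ∀ x, g' x ≤ gbar' x)
    (hgbint : Integrable gbar μ) (hgb'int : Integrable gbar' μ) (hGint : Integrable G μ)
    (hMint : Integrable (fun p : X × X => M p.1 p.2 * gbar p.1 * gbar' p.2) (μ.prod μ))
    (hφ0 : ∀ x, 0 ≤ φ x) (hφ1 : ∫ x, φ x ∂μ = 1)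
    (hφenv : ∀ x, φ x ≤ σp * gbar x / (σm * cm')) :
    ∀ h : X → ℝ, Measurable h → (∀ x, |h x| ≤ 1) →
      |(∫ x, φ x * (∫ x', m x x' * g x' * h x' ∂μ) ∂μ) /
          (∫ x, φ x * (∫ x', m x x' * g x' ∂μ) ∂μ) -
        (∫ x, φ x * (∫ x', m' x x' * g' x' * h x' ∂μ) ∂μ) /
          (∫ x, φ x * (∫ x', m' x x' * g' x' ∂μ) ∂μ)| ≤
      (2 * σp / (σm * cm)) *
        ((1 / (σm * cm')) * (∫ x, (∫ x', M x x' * gbar x * gbar' x' ∂μ) ∂μ) +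
          ∫ x, G x ∂μ) * δ := by
  intro h hhmeas hh1
  have hσp : 0 < σp := lt_of_lt_of_le hσm hσ
  set c : ℝ := σp / (σm * cm') with hc
  have hcpos : 0 < c := div_pos hσp (mul_pos hσm hcm')
  have hgb'0 : ∀ x, 0 ≤ gbar' x := fun x => (hg0 x).trans (hgenv x)
  have hφle : ∀ x, φ x ≤ c * gbar x := by
    intro x
    calc φ x ≤ σp * gbar x / (σm * cm') := hφenv x
    _ = c * gbar x := by rw [hc, div_mul_eq_mul_div]
  have hgb0 : ∀ x, 0 ≤ gbar x := by
    intro x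
    have h1 : (0 : ℝ) ≤ σp * gbar x / (σm * cm') := (hφ0 x).trans (hφenv x)
    rw [le_div_iff₀ (mul_pos hσm hcm'), zero_mul] at h1
    nlinarith
  have hφint : Integrable φ μ := by
    refine (hgbint.const_mul c).mono' hφmeas.aestronglyMeasurable (ae_of_all _ fun x => ?_)
    rw [Real.norm_eq_abs, abs_of_nonneg (hφ0 x)]
    exact hφle x
  set I' : ℝ := ∫ x, gbar' x ∂μ with hI'
  have hI'0 : 0 ≤ I' := integral_nonneg hgb'0
  set IG : ℝ := ∫ x, G x ∂μ with hIG
  have hIG0 : 0 ≤ IG := integral_nonneg hG0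
  set IM : ℝ := ∫ x, (∫ x', M x x' * gbar x * gbar' x' ∂μ) ∂μ with hIM
  have hIM0 : 0 ≤ IM :=
    integral_nonneg fun x => integral_nonneg fun x' =>
      mul_nonneg (mul_nonneg (hM0 x x') (hgb0 x)) (hgb'0 x')
  -- generic facts about inner/outer integrals
  have inner_int : ∀ (mm : X → X → ℝ) (gg k : X → ℝ), Measurable (Function.uncurry mm) →
      Measurable gg → Measurable k → (∀ x x', σm ≤ mm x x' ∧ mm x x' ≤ σp) →
      (∀ x, 0 ≤ gg x) → (∀ x, gg x ≤ gbar' x) → (∀ x, |k x| ≤ 1) →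
      ∀ x, Integrable (fun x' => mm x x' * gg x' * k x') μ := by
    intro mm gg k hmm hgg hk hbd h0 henv hk1 x
    refine (hgb'int.const_mul σp).mono'
      (((hmm.comp measurable_prodMk_left).mul hgg).mul hk).aestronglyMeasurable
      (ae_of_all _ fun x' => ?_)
    rw [Real.norm_eq_abs, abs_mul, abs_mul]
    have h1 : |mm x x'| ≤ σp := abs_le.mpr ⟨by linarith [(hbd x x').1], (hbd x x').2⟩
    have h2 : |gg x'| ≤ gbar' x' := by rw [abs_of_nonneg (h0 x')]; exact henv x'
    calc |mm x x'| * |gg x'| * |k x'| ≤ σp * gbar' x' * 1 :=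
          mul_le_mul (mul_le_mul h1 h2 (abs_nonneg _) hσp.le) (hk1 x') (abs_nonneg _)
            (mul_nonneg hσp.le (hgb'0 x'))
    _ = σp * gbar' x' := mul_one _
  have inner_meas : ∀ (mm : X → X → ℝ) (gg k : X → ℝ), Measurable (Function.uncurry mm) →
      Measurable gg → Measurable k →
      Measurable (fun x => ∫ x', mm x x' * gg x' * k x' ∂μ) := by
    intro mm gg k hmm hgg hk
    exact (StronglyMeasurable.integral_prod_right'
      ((hmm.mul (hgg.comp measurable_snd)).mul
        (hk.comp measurable_snd)).stronglyMeasurable).measurable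
  have inner_abs : ∀ (mm : X → X → ℝ) (gg k : X → ℝ),
      (∀ x x', σm ≤ mm x x' ∧ mm x x' ≤ σp) →
      (∀ x, 0 ≤ gg x) → (∀ x, gg x ≤ gbar' x) → (∀ x, |k x| ≤ 1) →
      ∀ x, |∫ x', mm x x' * gg x' * k x' ∂μ| ≤ σp * I' := by
    intro mm gg k hbd h0 henv hk1 x
    rw [← Real.norm_eq_abs]
    have hb := norm_integral_le_of_norm_le (μ := μ) (f := fun x' => mm x x' * gg x' * k x')
      (g := fun x' => σp * gbar' x') (hgb'int.const_mul σp)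
      (ae_of_all _ fun x' => by
        rw [Real.norm_eq_abs, abs_mul, abs_mul]
        have h1 : |mm x x'| ≤ σp := abs_le.mpr ⟨by linarith [(hbd x x').1], (hbd x x').2⟩
        have h2 : |gg x'| ≤ gbar' x' := by rw [abs_of_nonneg (h0 x')]; exact henv x'
        calc |mm x x'| * |gg x'| * |k x'| ≤ σp * gbar' x' * 1 :=
              mul_le_mul (mul_le_mul h1 h2 (abs_nonneg _) hσp.le) (hk1 x') (abs_nonneg _)
                (mul_nonneg hσp.le (hgb'0 x'))
        _ = σp * gbar' x' := mul_one _)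
    rwa [integral_const_mul] at hb
  have outer_int : ∀ (mm : X → X → ℝ) (gg k : X → ℝ), Measurable (Function.uncurry mm) →
      Measurable gg → Measurable k → (∀ x x', σm ≤ mm x x' ∧ mm x x' ≤ σp) →
      (∀ x, 0 ≤ gg x) → (∀ x, gg x ≤ gbar' x) → (∀ x, |k x| ≤ 1) →
      Integrable (fun x => φ x * ∫ x', mm x x' * gg x' * k x' ∂μ) μ := by
    intro mm gg k hmm hgg hk hbd h0 henv hk1
    refine (hφint.const_mul (σp * I')).mono'
      (hφmeas.mul (inner_meas mm gg k hmm hgg hk)).aestronglyMeasurable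
      (ae_of_all _ fun x => ?_)
    rw [Real.norm_eq_abs, abs_mul, abs_of_nonneg (hφ0 x)]
    calc φ x * |∫ x', mm x x' * gg x' * k x' ∂μ| ≤ φ x * (σp * I') :=
          mul_le_mul_of_nonneg_left (inner_abs mm gg k hbd h0 henv hk1 x) (hφ0 x)
    _ = σp * I' * φ x := mul_comm _ _
  -- lower bound on denominators
  have denom_lb : ∀ (mm : X → X → ℝ) (gg : X → ℝ), Measurable (Function.uncurry mm) →
      Measurable gg → (∀ x x', σm ≤ mm x x' ∧ mm x x' ≤ σp) →
      (∀ x, 0 ≤ gg x) → (∀ x, gg x ≤ gbar' x) → (cm ≤ ∫ x, gg x ∂μ) →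
      σm * cm ≤ ∫ x, φ x * (∫ x', mm x x' * gg x' ∂μ) ∂μ := by
    intro mm gg hmm hgg hbd h0 henv hgc0
    have hggint : Integrable gg μ := by
      refine hgb'int.mono' hgg.aestronglyMeasurable (ae_of_all _ fun x => ?_)
      rw [Real.norm_eq_abs, abs_of_nonneg (h0 x)]; exact henv x
    have hii : ∀ x, Integrable (fun x' => mm x x' * gg x') μ := by
      intro x
      have hb := inner_int mm gg (fun _ => 1) hmm hgg measurable_const hbd h0 henv
        (fun _ => by norm_num) x
      simpa using hb
    have hlb : ∀ x, σm * cm ≤ ∫ x', mm x x' * gg x' ∂μ := by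
      intro x
      have h1 : ∫ x', σm * gg x' ∂μ ≤ ∫ x', mm x x' * gg x' ∂μ :=
        integral_mono (hggint.const_mul σm) (hii x)
          (fun x' => mul_le_mul_of_nonneg_right (hbd x x').1 (h0 x'))
      rw [integral_const_mul] at h1
      nlinarith
    have h2 : ∫ x, φ x * (σm * cm) ∂μ ≤ ∫ x, φ x * (∫ x', mm x x' * gg x' ∂μ) ∂μ := by
      refine integral_mono (hφint.mul_const (σm * cm)) ?_
        (fun x => mul_le_mul_of_nonneg_left (hlb x) (hφ0 x))
      have hb := outer_int mm gg (fun _ => 1) hmm hgg measurable_const hbd h0 henv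
        (fun _ => by norm_num)
      simpa using hb
    rwa [integral_mul_const, hφ1, one_mul] at h2
  -- numerator dominated by denominator
  have num_le : ∀ (mm : X → X → ℝ) (gg k : X → ℝ), Measurable (Function.uncurry mm) →
      Measurable gg → Measurable k → (∀ x x', σm ≤ mm x x' ∧ mm x x' ≤ σp) →
      (∀ x, 0 ≤ gg x) → (∀ x, gg x ≤ gbar' x) → (∀ x, |k x| ≤ 1) →
      |∫ x, φ x * (∫ x', mm x x' * gg x' * k x' ∂μ) ∂μ| ≤
        ∫ x, φ x * (∫ x', mm x x' * gg x' ∂μ) ∂μ := by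
    intro mm gg k hmm hgg hk hbd h0 henv hk1
    rw [← Real.norm_eq_abs]
    have hden : Integrable (fun x => φ x * ∫ x', mm x x' * gg x' ∂μ) μ := by
      have hb := outer_int mm gg (fun _ => 1) hmm hgg measurable_const hbd h0 henv
        (fun _ => by norm_num)
      simpa using hb
    refine norm_integral_le_of_norm_le hden (ae_of_all _ fun x => ?_)
    rw [Real.norm_eq_abs, abs_mul, abs_of_nonneg (hφ0 x)]
    refine mul_le_mul_of_nonneg_left ?_ (hφ0 x)
    rw [← Real.norm_eq_abs]
    have hii : Integrable (fun x' => mm x x' * gg x') μ := by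
      have hb := inner_int mm gg (fun _ => 1) hmm hgg measurable_const hbd h0 henv
        (fun _ => by norm_num) x
      simpa using hb
    refine norm_integral_le_of_norm_le hii (ae_of_all _ fun x' => ?_)
    rw [Real.norm_eq_abs, abs_mul, abs_mul, abs_of_nonneg (h0 x'),
      abs_of_nonneg (le_trans hσm.le (hbd x x').1)]
    calc mm x x' * gg x' * |k x'| ≤ mm x x' * gg x' * 1 :=
          mul_le_mul_of_nonneg_left (hk1 x')
            (mul_nonneg (le_trans hσm.le (hbd x x').1) (h0 x'))
    _ = mm x x' * gg x' := mul_one _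
  -- the key Lipschitz difference bound
  set C : ℝ := c * IM + σp * IG with hCdef
  have hC0 : 0 ≤ C := add_nonneg (mul_nonneg hcpos.le hIM0) (mul_nonneg hσp.le hIG0)
  have key : ∀ k : X → ℝ, Measurable k → (∀ x, |k x| ≤ 1) →
      |(∫ x, φ x * (∫ x', m x x' * g x' * k x' ∂μ) ∂μ) -
        (∫ x, φ x * (∫ x', m' x x' * g' x' * k x' ∂μ) ∂μ)| ≤ δ * C := by
    intro k hk hk1
    have ho1 := outer_int m g k hmmeas hgmeas hk hmbd hg0 hgenv hk1
    have ho2 := outer_int m' g' k hm'meas hg'meas hk hm'bd hg'0 hg'env hk1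
    rw [← integral_sub ho1 ho2]
    have hHint : Integrable (fun x => ∫ x', M x x' * gbar x * gbar' x' ∂μ) μ :=
      hMint.integral_prod_left
    have hDint : Integrable
        (fun x => δ * (c * (∫ x', M x x' * gbar x * gbar' x' ∂μ) + σp * IG * φ x)) μ :=
      ((hHint.const_mul c).add (hφint.const_mul (σp * IG))).const_mul δ
    rw [← Real.norm_eq_abs]
    refine le_trans (norm_integral_le_of_norm_le hDint ?_) ?_
    · -- a.e. pointwise bound
      filter_upwards [hMint.prod_right_ae] with x hHx
      rw [← mul_sub, Real.norm_eq_abs, abs_mul, abs_of_nonneg (hφ0 x)]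
      rcases (hφ0 x).eq_or_lt with h0 | hpos
      · rw [← h0]
        simp only [zero_mul, mul_zero, add_zero]
        exact mul_nonneg hδ (mul_nonneg hcpos.le (integral_nonneg fun x' =>
          mul_nonneg (mul_nonneg (hM0 x x') (hgb0 x)) (hgb'0 x')))
      · have hgbx : 0 < gbar x := by nlinarith [hφle x, hcpos]
        have hMx : Integrable (fun x' => M x x' * gbar' x') μ := by
          have h2 := hHx.const_mul (gbar x)⁻¹
          refine h2.congr (ae_of_all _ fun x' => ?_)
          field_simp
        have hi1 := inner_int m g k hmmeas hgmeas hk hmbd hg0 hgenv hk1 x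
        have hi2 := inner_int m' g' k hm'meas hg'meas hk hm'bd hg'0 hg'env hk1 x
        have hdiff : |(∫ x', m x x' * g x' * k x' ∂μ) - ∫ x', m' x x' * g' x' * k x' ∂μ| ≤
            δ * ((∫ x', M x x' * gbar' x' ∂μ) + σp * IG) := by
          rw [← integral_sub hi1 hi2, ← Real.norm_eq_abs]
          have hupint : Integrable (fun x' => (M x x' * gbar' x' + σp * G x') * δ) μ :=
            (hMx.add (hGint.const_mul σp)).mul_const δ
          refine le_trans (norm_integral_le_of_norm_le hupint (ae_of_all _ fun x' => ?_)) ?_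
          · rw [Real.norm_eq_abs]
            have e1 : m x x' * g x' * k x' - m' x x' * g' x' * k x' =
                ((m x x' - m' x x') * g x' + m' x x' * (g x' - g' x')) * k x' := by ring
            rw [e1, abs_mul]
            have hb1 : |(m x x' - m' x x') * g x' + m' x x' * (g x' - g' x')| ≤
                (M x x' * gbar' x' + σp * G x') * δ := by
              refine le_trans (abs_add_le _ _) ?_
              rw [abs_mul, abs_mul]
              have t1 : |m x x' - m' x x'| * |g x'| ≤ M x x' * δ * gbar' x' :=
                mul_le_mul (hmlip x x')
                  (by rw [abs_of_nonneg (hg0 x')]; exact hgenv x') (abs_nonneg _)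
                  (mul_nonneg (hM0 x x') hδ)
              have t2 : |m' x x'| * |g x' - g' x'| ≤ σp * (G x' * δ) :=
                mul_le_mul
                  (abs_le.mpr ⟨by linarith [(hm'bd x x').1], (hm'bd x x').2⟩)
                  (hglip x') (abs_nonneg _) hσp.le
              calc |m x x' - m' x x'| * |g x'| + |m' x x'| * |g x' - g' x'| ≤
                    M x x' * δ * gbar' x' + σp * (G x' * δ) := add_le_add t1 t2
              _ = (M x x' * gbar' x' + σp * G x') * δ := by ring
            calc |(m x x' - m' x x') * g x' + m' x x' * (g x' - g' x')| * |k x'| ≤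
                  ((M x x' * gbar' x' + σp * G x') * δ) * 1 :=
                    mul_le_mul hb1 (hk1 x') (abs_nonneg _)
                      (mul_nonneg (add_nonneg (mul_nonneg (hM0 x x') (hgb'0 x'))
                        (mul_nonneg hσp.le (hG0 x'))) hδ)
            _ = (M x x' * gbar' x' + σp * G x') * δ := mul_one _
          · have heq : ∫ x', (M x x' * gbar' x' + σp * G x') * δ ∂μ =
                ((∫ x', M x x' * gbar' x' ∂μ) + σp * IG) * δ := by
              rw [integral_mul_const, integral_add hMx (hGint.const_mul σp),
                integral_const_mul]
            rw [heq, mul_comm]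
        calc φ x * |(∫ x', m x x' * g x' * k x' ∂μ) - ∫ x', m' x x' * g' x' * k x' ∂μ| ≤
              φ x * (δ * ((∫ x', M x x' * gbar' x' ∂μ) + σp * IG)) :=
                mul_le_mul_of_nonneg_left hdiff (hφ0 x)
        _ ≤ δ * (c * (∫ x', M x x' * gbar x * gbar' x' ∂μ) + σp * IG * φ x) := by
            have e2 : ∫ x', M x x' * gbar x * gbar' x' ∂μ =
                gbar x * ∫ x', M x x' * gbar' x' ∂μ := by
              rw [← integral_const_mul]
              exact integral_congr_ae (ae_of_all _ fun x' => by ring)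
            rw [e2]
            have h3 : φ x * (∫ x', M x x' * gbar' x' ∂μ) ≤
                c * (gbar x * ∫ x', M x x' * gbar' x' ∂μ) := by
              rw [← mul_assoc]
              exact mul_le_mul_of_nonneg_right (hφle x)
                (integral_nonneg fun x' => mul_nonneg (hM0 x x') (hgb'0 x'))
            have h4 := mul_le_mul_of_nonneg_left h3 hδ
            nlinarith [h4]
    · rw [integral_const_mul, integral_add (hHint.const_mul c) (hφint.const_mul (σp * IG)),
        integral_const_mul, integral_const_mul, hφ1, mul_one]
  -- final assembly
  have hA := key h hhmeas hh1
  have hB := key (fun _ => (1 : ℝ)) measurable_const (fun _ => by norm_num)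
  simp only [mul_one] at hB
  have hBlb := denom_lb m g hmmeas hgmeas hmbd hg0 hgenv hgc
  have hB'lb := denom_lb m' g' hm'meas hg'meas hm'bd hg'0 hg'env hg'c
  have hA'le := num_le m' g' h hm'meas hg'meas hhmeas hm'bd hg'0 hg'env hh1
  set A : ℝ := ∫ x, φ x * (∫ x', m x x' * g x' * h x' ∂μ) ∂μ with hAdef
  set B : ℝ := ∫ x, φ x * (∫ x', m x x' * g x' ∂μ) ∂μ with hBdef
  set A' : ℝ := ∫ x, φ x * (∫ x', m' x x' * g' x' * h x' ∂μ) ∂μ with hA'def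
  set B' : ℝ := ∫ x, φ x * (∫ x', m' x x' * g' x' ∂μ) ∂μ with hB'def
  have hb : 0 < σm * cm := mul_pos hσm hcm
  have hBpos : 0 < B := lt_of_lt_of_le hb hBlb
  have hB'pos : 0 < B' := lt_of_lt_of_le hb hB'lb
  have hsplit : A / B - A' / B' = (A - A') / B + (A' / B') * ((B' - B) / B) := by
    field_simp
    ring
  rw [hsplit]
  have h1 : |(A - A') / B| ≤ δ * C / (σm * cm) := by
    rw [abs_div, abs_of_pos hBpos]
    exact div_le_div₀ (mul_nonneg hδ hC0) hA hb hBlb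
  have h2 : |(A' / B') * ((B' - B) / B)| ≤ 1 * (δ * C / (σm * cm)) := by
    rw [abs_mul]
    refine mul_le_mul ?_ ?_ (abs_nonneg _) zero_le_one
    · rw [abs_div, abs_of_pos hB'pos]
      exact div_le_one_of_le₀ hA'le hB'pos.le
    · rw [abs_div, abs_of_pos hBpos, abs_sub_comm]
      exact div_le_div₀ (mul_nonneg hδ hC0) hB hb hBlb
  calc |(A - A') / B + (A' / B') * ((B' - B) / B)| ≤
        |(A - A') / B| + |(A' / B') * ((B' - B) / B)| := abs_add_le _ _
  _ ≤ δ * C / (σm * cm) + 1 * (δ * C / (σm * cm)) := add_le_add h1 h2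
  _ = (2 * σp / (σm * cm)) * ((1 / (σm * cm')) * IM + IG) * δ := by
      rw [hCdef, hc]
      field_simp
      ring
end

section
/- Let f : Θ → ℝ^d and S : Θ → Sym(d) be continuously differentiable on a compact set Θ ⊂ ℝ^p, with S(θ) positive definite, λ̲·I ⪯ S(θ) ⪯ λ̄·I and ‖f(θ)‖ ≤ M̄ for all θ. Then the map θ ↦ g_θ(x), where g_θ(x) is the Gaussian density with mean f(θ) and precision S(θ) evaluated at x ∈ ℝ^d, is Lipschitz in θ uniformly in x: there is a finite constant C (depending on d, M̄, λ̲, λ̄ and the derivative bounds on Θ) and a function G(x) with polynomial-times-Gaussian decay such that |g_θ(x) − g_θ'(x)| ≤ G(x)·‖θ − θ'‖ for all θ, θ' ∈ Θ and x. -/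
/-!
Write `g_θ(x) = A(θ) exp (-Q_θ(x) / 2)` with `A = (2π)^(-d/2) √(det S)`. Since `S ⪰ λ̲ I` and
`‖f‖ ≤ M̄`, the exponent satisfies `Q_θ(x) ≥ λ̲ (‖x‖² / 2 - M̄²)`, so both densities carry the
factor `exp (-λ̲ ‖x‖² / 4)`, and on that range `exp (-· / 2)` is Lipschitz with this factor as
constant. The exponent is quadratic in `x - f(θ)` with coefficients `S(θ)`, and the C¹ maps `f`,
`S` are Lipschitz on the compact set `Θ`, so `Q_θ(x)` moves by at most `C (1 + ‖x‖)² ‖θ - θ'‖`.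
Finally `det S ≥ λ̲ ^ d` keeps `√(det S)` away from the singularity of the square root at `0`,
so the amplitude `A` is Lipschitz on `Θ` too.
-/

open Real
open scoped MatrixOrder

theorem abs_sqrt_sub_sqrt_le {m a b : ℝ} (hm : 0 < m) (ha : m ≤ a) (hb : m ≤ b) :
    |√a - √b| ≤ |a - b| / (2 * √m) := by
  have hsum : 2 * √m ≤ √a + √b := by
    linarith [Real.sqrt_le_sqrt ha, Real.sqrt_le_sqrt hb]
  rw [le_div_iff₀ (by positivity)]
  calc |√a - √b| * (2 * √m) ≤ |√a - √b| * (√a + √b) := by gcongr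
    _ = |a - b| := by
      rw [← abs_of_nonneg (by positivity : 0 ≤ √a + √b), ← abs_mul]
      congr 1
      ring_nf
      rw [sq_sqrt (hm.le.trans ha), sq_sqrt (hm.le.trans hb)]

theorem abs_exp_neg_sub_exp_neg_le {a b q : ℝ} (ha : q ≤ a) (hb : q ≤ b) :
    |exp (-a) - exp (-b)| ≤ exp (-q) * |a - b| := by
  wlog hab : a ≤ b generalizing a b
  · rw [abs_sub_comm, abs_sub_comm a]
    exact this hb ha (le_of_not_ge hab)
  have hexp : exp (-b) = exp (-a) * exp (a - b) := by rw [← exp_add]; ring_nf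
  rw [abs_of_nonneg (sub_nonneg.2 (exp_le_exp.2 (neg_le_neg hab))),
    abs_of_nonpos (sub_nonpos.2 hab), neg_sub]
  calc exp (-a) - exp (-b) ≤ exp (-a) * (b - a) := by
        nlinarith [add_one_le_exp (a - b), exp_pos (-a)]
    _ ≤ exp (-q) * (b - a) := by gcongr

theorem abs_mul_exp_sub_mul_exp_le {A A' α Q Q' q : ℝ} (hA : 0 ≤ A) (hAα : A ≤ α)
    (hQ : q ≤ Q) (hQ' : q ≤ Q') :
    |A * exp (-Q / 2) - A' * exp (-Q' / 2)| ≤ exp (-q / 2) * (α * |Q - Q'| / 2 + |A - A'|) := by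
  have hexp := abs_exp_neg_sub_exp_neg_le (a := Q / 2) (b := Q' / 2) (q := q / 2)
    (by linarith) (by linarith)
  have hhalf : |Q / 2 - Q' / 2| = |Q - Q'| / 2 := by
    rw [← sub_div, abs_div, abs_two]
  have hQ'exp : exp (-(Q' / 2)) ≤ exp (-(q / 2)) := by gcongr
  have hα : 0 ≤ α := hA.trans hAα
  simp only [neg_div]
  calc |A * exp (-(Q / 2)) - A' * exp (-(Q' / 2))|
      = |A * (exp (-(Q / 2)) - exp (-(Q' / 2))) + (A - A') * exp (-(Q' / 2))| := by ring_nf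
    _ ≤ A * |exp (-(Q / 2)) - exp (-(Q' / 2))| + |A - A'| * exp (-(Q' / 2)) := by
      refine (abs_add_le _ _).trans ?_
      rw [abs_mul, abs_mul, abs_of_nonneg hA, abs_of_pos (exp_pos _)]
    _ ≤ α * (exp (-(q / 2)) * (|Q - Q'| / 2)) + |A - A'| * exp (-(q / 2)) := by
      rw [← hhalf]; gcongr
    _ = exp (-(q / 2)) * (α * |Q - Q'| / 2 + |A - A'|) := by ring

section Sums

variable {n : Type*} [Fintype n]

theorem abs_le_sqrt_sum_sq (v : n → ℝ) (i : n) : |v i| ≤ √(∑ j, v j ^ 2) :=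
  Real.abs_le_sqrt (Finset.single_le_sum (fun j _ => sq_nonneg (v j)) (Finset.mem_univ i))

theorem norm_le_sqrt_sum_sq (v : n → ℝ) : ‖v‖ ≤ √(∑ j, v j ^ 2) :=
  (pi_norm_le_iff_of_nonneg (Real.sqrt_nonneg _)).2 fun i => abs_le_sqrt_sum_sq v i

theorem sum_sq_div_two_sub_sq_le_sum_sub_sq (x μ : n → ℝ) {R : ℝ}
    (hμ : √(∑ i, μ i ^ 2) ≤ R) :
    (∑ i, x i ^ 2) / 2 - R ^ 2 ≤ ∑ i, (x i - μ i) ^ 2 := by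
  have hR : ∑ i, μ i ^ 2 ≤ R ^ 2 := (Real.sqrt_le_iff.1 hμ).2
  calc (∑ i, x i ^ 2) / 2 - R ^ 2 ≤ ∑ i, (x i ^ 2 / 2 - μ i ^ 2) := by
        rw [Finset.sum_sub_distrib, Finset.sum_div]; linarith
    _ ≤ ∑ i, (x i - μ i) ^ 2 :=
        Finset.sum_le_sum fun i _ => by nlinarith [sq_nonneg (x i - 2 * μ i)]

theorem abs_sum_sum_mul_mul_le {a b : n → ℝ} {M : Matrix n n ℝ} {α μ β : ℝ}
    (ha : ∀ i, |a i| ≤ α) (hM : ∀ i j, |M i j| ≤ μ) (hb : ∀ j, |b j| ≤ β) :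
    |∑ i, ∑ j, a i * M i j * b j| ≤ Fintype.card n ^ 2 * (α * μ * β) := by
  have hterm : ∀ i j, |a i * M i j * b j| ≤ α * μ * β := fun i j => by
    rw [abs_mul, abs_mul]
    exact mul_le_mul (mul_le_mul (ha i) (hM i j) (abs_nonneg _) ((abs_nonneg _).trans (ha i)))
      (hb j) (abs_nonneg _) (mul_nonneg ((abs_nonneg _).trans (ha i)) ((abs_nonneg _).trans (hM i j)))
  calc |∑ i, ∑ j, a i * M i j * b j| ≤ ∑ i, ∑ j, |a i * M i j * b j| :=
        (Finset.abs_sum_le_sum_abs _ _).trans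
          (Finset.sum_le_sum fun i _ => Finset.abs_sum_le_sum_abs _ _)
    _ ≤ ∑ _i : n, ∑ _j : n, α * μ * β := by gcongr with i _ j; exact hterm i j
    _ = Fintype.card n ^ 2 * (α * μ * β) := by simp [sq, mul_assoc]

theorem abs_sum_sum_mul_mul_sub_le {a a' : n → ℝ} {M M' : Matrix n n ℝ} {α μ δ ε : ℝ}
    (ha : ∀ i, |a i| ≤ α) (ha' : ∀ i, |a' i| ≤ α) (hM : ∀ i j, |M i j| ≤ μ)
    (hM' : ∀ i j, |M' i j| ≤ μ) (hδ : ∀ i, |a i - a' i| ≤ δ) (hε : ∀ i j, |M i j - M' i j| ≤ ε) :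
    |∑ i, ∑ j, a i * M i j * a j - ∑ i, ∑ j, a' i * M' i j * a' j| ≤
      Fintype.card n ^ 2 * (2 * α * μ * δ + α ^ 2 * ε) := by
  have hsplit : ∑ i, ∑ j, a i * M i j * a j - ∑ i, ∑ j, a' i * M' i j * a' j =
      ∑ i, ∑ j, (a i - a' i) * M i j * a j + ∑ i, ∑ j, a' i * (M - M') i j * a j +
        ∑ i, ∑ j, a' i * M' i j * (a j - a' j) := by
    simp only [← Finset.sum_sub_distrib, ← Finset.sum_add_distrib, Matrix.sub_apply]
    exact Finset.sum_congr rfl fun i _ => Finset.sum_congr rfl fun j _ => by ring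
  have h₁ := abs_sum_sum_mul_mul_le hδ hM ha
  have h₂ := abs_sum_sum_mul_mul_le ha' (M := M - M') hε ha
  have h₃ := abs_sum_sum_mul_mul_le ha' hM' hδ
  rw [hsplit]
  refine (abs_add_three _ _ _).trans ?_
  linarith

end Sums

theorem abs_apply_apply_le_norm {m n : Type*} [Fintype m] [Fintype n] (A : m → n → ℝ)
    (i : m) (j : n) : |A i j| ≤ ‖A‖ :=
  (norm_le_pi_norm (A i) j).trans (norm_le_pi_norm A i)

namespace Matrix

variable {n : Type*} [Fintype n] [DecidableEq n] {M : Matrix n n ℝ} {m : ℝ}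

theorem mul_sum_sq_le_of_posSemidef_sub_smul_one (h : (M - m • 1).PosSemidef) (v : n → ℝ) :
    m * ∑ i, v i ^ 2 ≤ ∑ i, ∑ j, v i * M i j * v j := by
  have hv := h.dotProduct_mulVec_nonneg v
  simp only [star_trivial, sub_mulVec, dotProduct_sub, smul_mulVec, one_mulVec,
    dotProduct_smul, sub_nonneg] at hv
  have hsq : v ⬝ᵥ v = ∑ i, v i ^ 2 := by simp only [dotProduct, sq]
  have hquad : v ⬝ᵥ M *ᵥ v = ∑ i, ∑ j, v i * M i j * v j := by
    simp only [dotProduct, mulVec, Finset.mul_sum, mul_assoc]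
  rwa [hsq, hquad, smul_eq_mul] at hv

theorem pow_card_le_det_of_posSemidef_sub_smul_one (hm : 0 ≤ m) (h : (M - m • 1).PosSemidef) :
    m ^ Fintype.card n ≤ M.det := by
  have hH : M.IsHermitian := by
    simpa using h.isHermitian.add (isHermitian_one.smul (IsSelfAdjoint.all m))
  have hle : algebraMap ℝ _ m ≤ M := by
    rwa [le_iff, Algebra.algebraMap_eq_smul_one]
  have hspec := (algebraMap_le_iff_le_spectrum (a := M)).1 hle
  rw [hH.det_eq_prod_eigenvalues]
  calc m ^ Fintype.card n = ∏ _i : n, m := by simp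
    _ ≤ _ := Finset.prod_le_prod (fun _ _ => hm) fun i _ =>
        hspec _ (hH.eigenvalues_mem_spectrum_real i)

end Matrix

theorem ContDiff.matrix_det {E : Type*} [NormedAddCommGroup E] [NormedSpace ℝ E]
    {n : Type*} [Fintype n] [DecidableEq n] {k : WithTop ℕ∞} {A : E → Matrix n n ℝ}
    (hA : ∀ i j, ContDiff ℝ k fun x => A x i j) : ContDiff ℝ k fun x => (A x).det := by
  simp only [Matrix.det_apply']
  exact ContDiff.sum fun σ _ => contDiff_const.mul (contDiff_prod fun i _ => hA (σ i) i)

theorem ContDiff.exists_norm_sub_le_mul_sqrt_sum_sq {ι F : Type*} [Fintype ι]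
    [NormedAddCommGroup F] [NormedSpace ℝ F] {g : (ι → ℝ) → F} (hg : ContDiff ℝ 1 g)
    {K : Set (ι → ℝ)} (hK : IsCompact K) :
    ∃ L : ℝ, 0 ≤ L ∧ ∀ θ ∈ K, ∀ θ' ∈ K, ‖g θ - g θ'‖ ≤ L * √(∑ j, (θ j - θ' j) ^ 2) := by
  obtain ⟨L, hL⟩ := hg.locallyLipschitz.locallyLipschitzOn.exists_lipschitzOnWith_of_compact hK
  exact ⟨L, L.2, fun θ hθ θ' hθ' => (hL.norm_sub_le hθ hθ').trans
    (mul_le_mul_of_nonneg_left (norm_le_sqrt_sum_sq (θ - θ')) L.2)⟩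

section GaussianFamily

variable {ι n : Type*} [Fintype ι] [Fintype n] {Θ : Set (ι → ℝ)}
  {f : (ι → ℝ) → n → ℝ} {S : (ι → ℝ) → Matrix n n ℝ}

def gaussExponent (M : Matrix n n ℝ) (μ x : n → ℝ) : ℝ :=
  ∑ i, ∑ j, (x i - μ i) * M i j * (x j - μ j)

theorem mul_sub_le_gaussExponent [DecidableEq n] {M : Matrix n n ℝ} {m R : ℝ} (hm : 0 ≤ m)
    (hM : (M - m • 1).PosSemidef) {μ : n → ℝ} (hμ : √(∑ i, μ i ^ 2) ≤ R) (x : n → ℝ) :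
    m * ((∑ i, x i ^ 2) / 2 - R ^ 2) ≤ gaussExponent M μ x :=
  (mul_le_mul_of_nonneg_left (sum_sq_div_two_sub_sq_le_sum_sub_sq x μ hμ) hm).trans
    (Matrix.mul_sum_sq_le_of_posSemidef_sub_smul_one hM _)

theorem exists_abs_gaussExponent_sub_le (hΘ : IsCompact Θ) (hf : ContDiff ℝ 1 f)
    (hS : ContDiff ℝ 1 fun θ => (fun i j => S θ i j : n → n → ℝ)) {R : ℝ} (hR : 0 ≤ R)
    (hmean : ∀ θ ∈ Θ, √(∑ i, f θ i ^ 2) ≤ R) :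
    ∃ C, 0 ≤ C ∧ ∀ θ ∈ Θ, ∀ θ' ∈ Θ, ∀ x : n → ℝ,
      |gaussExponent (S θ) (f θ) x - gaussExponent (S θ') (f θ') x| ≤
        C * (1 + √(∑ i, x i ^ 2)) ^ 2 * √(∑ j, (θ j - θ' j) ^ 2) := by
  obtain ⟨Lf, hLf0, hLf⟩ := hf.exists_norm_sub_le_mul_sqrt_sum_sq hΘ
  obtain ⟨LS, hLS0, hLS⟩ := hS.exists_norm_sub_le_mul_sqrt_sum_sq hΘ
  obtain ⟨B, hB⟩ := hΘ.exists_bound_of_continuousOn hS.continuous.continuousOn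
  have hentry : ∀ ϑ ∈ Θ, ∀ i j, |S ϑ i j| ≤ max B 0 := fun ϑ hϑ i j =>
    (abs_apply_apply_le_norm _ i j).trans ((hB ϑ hϑ).trans (le_max_left _ _))
  refine ⟨Fintype.card n ^ 2 * (2 * (R + 1) * max B 0 * Lf + (R + 1) ^ 2 * LS), by positivity,
    fun θ hθ θ' hθ' x => ?_⟩
  set r := √(∑ i, x i ^ 2)
  set t := √(∑ j, (θ j - θ' j) ^ 2)
  have hdev : ∀ ϑ ∈ Θ, ∀ i, |x i - f ϑ i| ≤ (R + 1) * (1 + r) := fun ϑ hϑ i => by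
    have hx := abs_le_sqrt_sum_sq x i
    have hfϑ := (abs_le_sqrt_sum_sq (f ϑ) i).trans (hmean ϑ hϑ)
    nlinarith [abs_sub (x i) (f ϑ i), Real.sqrt_nonneg (∑ i, x i ^ 2)]
  have hmean_sub : ∀ i, |(x i - f θ i) - (x i - f θ' i)| ≤ Lf * t := fun i => by
    rw [sub_sub_sub_cancel_left, abs_sub_comm]
    exact (norm_le_pi_norm (f θ - f θ') i).trans (hLf θ hθ θ' hθ')
  have hprec_sub : ∀ i j, |S θ i j - S θ' i j| ≤ LS * t := fun i j =>
    (abs_apply_apply_le_norm _ i j).trans (hLS θ hθ θ' hθ')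
  have hr : 1 + r ≤ (1 + r) ^ 2 := by nlinarith [Real.sqrt_nonneg (∑ i, x i ^ 2)]
  calc _ ≤ Fintype.card n ^ 2 *
        (2 * ((R + 1) * (1 + r)) * max B 0 * (Lf * t) + ((R + 1) * (1 + r)) ^ 2 * (LS * t)) :=
      abs_sum_sum_mul_mul_sub_le (hdev θ hθ) (hdev θ' hθ') (hentry θ hθ) (hentry θ' hθ')
        hmean_sub hprec_sub
    _ = Fintype.card n ^ 2 * (2 * (R + 1) * max B 0 * Lf * t * (1 + r) +
          (R + 1) ^ 2 * LS * t * (1 + r) ^ 2) := by ring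
    _ ≤ Fintype.card n ^ 2 * (2 * (R + 1) * max B 0 * Lf * t * (1 + r) ^ 2 +
          (R + 1) ^ 2 * LS * t * (1 + r) ^ 2) := by gcongr
    _ = _ := by ring

theorem exists_sqrt_det_le [DecidableEq n] (hΘ : IsCompact Θ)
    (hS : ContDiff ℝ 1 fun θ => (fun i j => S θ i j : n → n → ℝ)) :
    ∃ A, 0 ≤ A ∧ ∀ θ ∈ Θ, √(S θ).det ≤ A := by
  obtain ⟨A, hA⟩ := hΘ.exists_bound_of_continuousOn
    (hS.continuous.matrix_det.sqrt.continuousOn (f := fun θ => √(S θ).det))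
  exact ⟨max A 0, le_max_right _ _, fun θ hθ =>
    (le_abs_self _).trans ((hA θ hθ).trans (le_max_left _ _))⟩

theorem exists_abs_sqrt_det_sub_le [DecidableEq n] (hΘ : IsCompact Θ)
    (hS : ContDiff ℝ 1 fun θ => (fun i j => S θ i j : n → n → ℝ)) {m : ℝ} (hm : 0 < m)
    (hlow : ∀ θ ∈ Θ, (S θ - m • 1).PosSemidef) :
    ∃ C, 0 ≤ C ∧ ∀ θ ∈ Θ, ∀ θ' ∈ Θ,
      |√(S θ).det - √(S θ').det| ≤ C * √(∑ j, (θ j - θ' j) ^ 2) := by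
  have hdet : ContDiff ℝ 1 fun θ => (S θ).det :=
    ContDiff.matrix_det fun i j => contDiff_pi.1 (contDiff_pi.1 hS i) j
  obtain ⟨L, hL0, hL⟩ := hdet.exists_norm_sub_le_mul_sqrt_sum_sq hΘ
  have hdet_ge : ∀ θ ∈ Θ, m ^ Fintype.card n ≤ (S θ).det := fun θ hθ =>
    Matrix.pow_card_le_det_of_posSemidef_sub_smul_one hm.le (hlow θ hθ)
  refine ⟨L / (2 * √(m ^ Fintype.card n)), by positivity, fun θ hθ θ' hθ' => ?_⟩
  calc |√(S θ).det - √(S θ').det| ≤ |(S θ).det - (S θ').det| / (2 * √(m ^ Fintype.card n)) :=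
        abs_sqrt_sub_sqrt_le (by positivity) (hdet_ge θ hθ) (hdet_ge θ' hθ')
    _ ≤ L * √(∑ j, (θ j - θ' j) ^ 2) / (2 * √(m ^ Fintype.card n)) := by
        gcongr; exact hL θ hθ θ' hθ'
    _ = _ := by ring

end GaussianFamily

theorem stmt_16_general (d p : ℕ) (Θ : Set (Fin p → ℝ)) (hΘ : IsCompact Θ)
    (f : (Fin p → ℝ) → Fin d → ℝ)
    (S : (Fin p → ℝ) → Matrix (Fin d) (Fin d) ℝ)
    (hf : ContDiff ℝ 1 f)
    (hS : ContDiff ℝ 1 fun θ => (fun i j => S θ i j : Fin d → Fin d → ℝ))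
    (Mbar lml : ℝ) (hl : 0 < lml)
    (hmean : ∀ θ ∈ Θ, Real.sqrt (∑ i, f θ i ^ 2) ≤ Mbar)
    (hlow : ∀ θ ∈ Θ, (S θ - lml • (1 : Matrix (Fin d) (Fin d) ℝ)).PosSemidef) :
    ∃ G : (Fin d → ℝ) → ℝ,
      (∀ x, 0 ≤ G x) ∧
      (∃ (C : ℝ) (k : ℕ) (c : ℝ), 0 < c ∧ ∀ x,
        G x ≤ C * (1 + Real.sqrt (∑ i, x i ^ 2)) ^ k * Real.exp (-c * ∑ i, x i ^ 2)) ∧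
      ∀ θ ∈ Θ, ∀ θ' ∈ Θ, ∀ x : Fin d → ℝ,
        |Real.sqrt (S θ).det * (2 * Real.pi) ^ (-(d : ℝ) / 2) *
            Real.exp (-(∑ i, ∑ j, (x i - f θ i) * S θ i j * (x j - f θ j)) / 2) -
          Real.sqrt (S θ').det * (2 * Real.pi) ^ (-(d : ℝ) / 2) *
            Real.exp (-(∑ i, ∑ j, (x i - f θ' i) * S θ' i j * (x j - f θ' j)) / 2)| ≤
        G x * Real.sqrt (∑ j, (θ j - θ' j) ^ 2) := by
  obtain ⟨R, hR0, hmean⟩ : ∃ R, 0 ≤ R ∧ ∀ θ ∈ Θ, √(∑ i, f θ i ^ 2) ≤ R :=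
    ⟨max Mbar 0, le_max_right _ _, fun θ hθ => (hmean θ hθ).trans (le_max_left _ _)⟩
  obtain ⟨CQ, hCQ0, hCQ⟩ := exists_abs_gaussExponent_sub_le hΘ hf hS hR0 hmean
  obtain ⟨CA, hCA0, hCA⟩ := exists_abs_sqrt_det_sub_le hΘ hS hl hlow
  obtain ⟨A, hA0, hA⟩ := exists_sqrt_det_le hΘ hS
  set c := (2 * π) ^ (-(d : ℝ) / 2)
  have hc : 0 < c := by positivity
  set K := exp (lml * R ^ 2 / 2) * (A * c * CQ / 2 + c * CA)
  refine ⟨fun x => K * (1 + √(∑ i, x i ^ 2)) ^ 2 * exp (-(lml / 4) * ∑ i, x i ^ 2),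
    fun x => by positivity, ⟨K, 2, lml / 4, by positivity, fun x => le_rfl⟩,
    fun θ hθ θ' hθ' x => ?_⟩
  set r := √(∑ i, x i ^ 2)
  set t := √(∑ j, (θ j - θ' j) ^ 2)
  have hlower := fun ϑ hϑ => mul_sub_le_gaussExponent hl.le (hlow ϑ hϑ) (hmean ϑ hϑ) x
  have hamp : |√(S θ).det * c - √(S θ').det * c| ≤ c * CA * (1 + r) ^ 2 * t := by
    have hr : 1 ≤ (1 + r) ^ 2 := one_le_pow₀ (le_add_of_nonneg_right (sqrt_nonneg _))
    calc |√(S θ).det * c - √(S θ').det * c| = c * |√(S θ).det - √(S θ').det| * 1 := by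
          rw [← sub_mul, abs_mul, abs_of_pos hc, mul_one, mul_comm]
      _ ≤ c * (CA * t) * (1 + r) ^ 2 := by gcongr; exact hCA θ hθ θ' hθ'
      _ = c * CA * (1 + r) ^ 2 * t := by ring
  calc _ ≤ exp (-(lml * ((∑ i, x i ^ 2) / 2 - R ^ 2)) / 2) *
        (A * c * |gaussExponent (S θ) (f θ) x - gaussExponent (S θ') (f θ') x| / 2 +
          |√(S θ).det * c - √(S θ').det * c|) :=
      abs_mul_exp_sub_mul_exp_le (by positivity) (by gcongr; exact hA θ hθ)
        (hlower θ hθ) (hlower θ' hθ')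
    _ ≤ exp (-(lml * ((∑ i, x i ^ 2) / 2 - R ^ 2)) / 2) *
        (A * c * (CQ * (1 + r) ^ 2 * t) / 2 + c * CA * (1 + r) ^ 2 * t) := by
      gcongr
      exact hCQ θ hθ θ' hθ' x
    _ = _ := by
      rw [show -(lml * ((∑ i, x i ^ 2) / 2 - R ^ 2)) / 2 = lml * R ^ 2 / 2 + -(lml / 4) * ∑ i, x i ^ 2
        by ring, exp_add]
      ring

/-- Lipschitz-in-the-parameter property (assumption H3) for Gaussian densities whose
mean and precision are C¹ functions of the parameter on a compact set, with a
Lipschitz coefficient G(x) of polynomial-times-Gaussian decay (Section 3.4 of the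
paper). -/
theorem stmt_16 (d p : ℕ) (Θ : Set (Fin p → ℝ)) (hΘ : IsCompact Θ)
    (f : (Fin p → ℝ) → Fin d → ℝ)
    (S : (Fin p → ℝ) → Matrix (Fin d) (Fin d) ℝ)
    (hf : ContDiff ℝ 1 f)
    (hS : ContDiff ℝ 1 fun θ => (fun i j => S θ i j : Fin d → Fin d → ℝ))
    (Mbar lml lmu : ℝ) (hl : 0 < lml)
    (hmean : ∀ θ ∈ Θ, Real.sqrt (∑ i, f θ i ^ 2) ≤ Mbar)
    (hsym : ∀ θ ∈ Θ, (S θ).IsSymm)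
    (hlow : ∀ θ ∈ Θ, (S θ - lml • (1 : Matrix (Fin d) (Fin d) ℝ)).PosSemidef)
    (hup : ∀ θ ∈ Θ, (lmu • (1 : Matrix (Fin d) (Fin d) ℝ) - S θ).PosSemidef) :
    ∃ G : (Fin d → ℝ) → ℝ,
      (∀ x, 0 ≤ G x) ∧
      (∃ (C : ℝ) (k : ℕ) (c : ℝ), 0 < c ∧ ∀ x,
        G x ≤ C * (1 + Real.sqrt (∑ i, x i ^ 2)) ^ k * Real.exp (-c * ∑ i, x i ^ 2)) ∧
      ∀ θ ∈ Θ, ∀ θ' ∈ Θ, ∀ x : Fin d → ℝ,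
        |Real.sqrt (S θ).det * (2 * Real.pi) ^ (-(d : ℝ) / 2) *
            Real.exp (-(∑ i, ∑ j, (x i - f θ i) * S θ i j * (x j - f θ j)) / 2) -
          Real.sqrt (S θ').det * (2 * Real.pi) ^ (-(d : ℝ) / 2) *
            Real.exp (-(∑ i, ∑ j, (x i - f θ' i) * S θ' i j * (x j - f θ' j)) / 2)| ≤
        G x * Real.sqrt (∑ j, (θ j - θ' j) ^ 2) :=
  stmt_16_general d p Θ hΘ f S hf hS Mbar lml hl hmean hlow
end
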